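/- Let h : [0,∞) → (0,∞) be a decreasing function with h(t) → 0 as t → ∞. Then there exists a smooth positive decreasing function A : [0,∞) → (0,∞) such that h(t) ≤ A(t) for all t ≥ 0, A(t) → 0 as t → ∞, and 0 ≤ -A'(t) ≤ 100·A(t) for all t ≥ 0. -/

import Mathlib

open Filter Set

theorem stmt_0 (h : ℝ → ℝ)
    (hpos : ∀ t ≥ 0, 0 < h t)
    (hdec : AntitoneOn h (Set.Ici 0))
    (hlim : Tendsto h atTop (nhds 0)) :
    ∃ A : ℝ → ℝ,
      ContDiff ℝ (⊤ : ℕ∞) A ∧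
      (∀ t ≥ 0, 0 < A t) ∧
      AntitoneOn A (Set.Ici 0) ∧
      (∀ t ≥ 0, h t ≤ A t) ∧
      Tendsto A atTop (nhds 0) ∧
      (∀ t ≥ 0, 0 ≤ -deriv A t ∧ -deriv A t ≤ 100 * A t) := by
  classical
  -- Step 1: a sequence of thresholds
  have hB : ∀ n : ℕ, ∃ b : ℝ, ∀ x ≥ b, h x ≤ (1/2 : ℝ) ^ n := by
    intro n
    have : ∀ᶠ x in atTop, h x < (1/2 : ℝ) ^ n :=
      hlim.eventually (gt_mem_nhds (by positivity))
    obtain ⟨b, hb⟩ := eventually_atTop.1 this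
    exact ⟨b, fun x hx => (hb x hx).le⟩
  choose B hBspec using hB
  -- recursive sequence T
  set T : ℕ → ℝ := fun n => Nat.rec 0 (fun m tm => max (tm + 1) (max 1 (B (m + 1)))) n with hT
  have hT0 : T 0 = 0 := rfl
  have hTs : ∀ n, T (n + 1) = max (T n + 1) (max 1 (B (n + 1))) := fun n => rfl
  have hTmono : ∀ n, T n + 1 ≤ T (n + 1) := fun n => by rw [hTs]; exact le_max_left _ _
  have hT1 : ∀ n, 1 ≤ T (n + 1) := fun n => by
    rw [hTs]; exact le_trans (le_max_left _ _) (le_max_right _ _)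
  have hTpos : ∀ n, 0 < T (n + 1) := fun n => lt_of_lt_of_le one_pos (hT1 n)
  have hTnn : ∀ n, 0 ≤ T n := by
    intro n
    cases n with
    | zero => simp [hT0]
    | succ m => exact (hTpos m).le
  have hhT : ∀ n, h (T (n + 1)) ≤ (1/2 : ℝ) ^ (n + 1) := by
    intro n
    refine hBspec (n + 1) _ ?_
    rw [hTs]
    exact le_trans (le_max_right _ _) (le_max_right _ _)
  have hTge : ∀ n : ℕ, (n : ℝ) ≤ T n := by
    intro n
    induction n with
    | zero => simp [hT0]
    | succ m ih =>
      push_cast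
      calc (m : ℝ) + 1 ≤ T m + 1 := by linarith
        _ ≤ T (m + 1) := hTmono m
  -- Step 2 : coefficients
  set d : ℕ → ℝ := fun n => h (T n) with hd
  have hdpos : ∀ n, 0 < d n := fun n => hpos _ (hTnn n)
  have hdsum : Summable d := by
    refine Summable.of_nonneg_of_le (fun n => (hdpos n).le)
      (f := fun n => max (h 0) 1 * (1/2 : ℝ) ^ n) (fun n => ?_) ?_
    · cases n with
      | zero =>
        simpa [hd, hT0] using le_max_left (h 0) 1
      | succ m =>
        calc d (m + 1) ≤ (1/2 : ℝ) ^ (m + 1) := hhT m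
          _ = 1 * (1/2 : ℝ) ^ (m + 1) := by ring
          _ ≤ max (h 0) 1 * (1/2 : ℝ) ^ (m + 1) := by
            apply mul_le_mul_of_nonneg_right (le_max_right _ _) (by positivity)
    · exact (summable_geometric_of_lt_one (by norm_num) (by norm_num)).mul_left _
  set c : ℕ → ℝ := fun n => Real.exp 1 * d n with hc
  have hcpos : ∀ n, 0 < c n := fun n => mul_pos (Real.exp_pos 1) (hdpos n)
  have hcsum : Summable c := hdsum.mul_left _
  set ε : ℕ → ℝ := fun n => (T (n + 1))⁻¹ with hε
  have hεpos : ∀ n, 0 < ε n := fun n => inv_pos.2 (hTpos n)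
  have hεle1 : ∀ n, ε n ≤ 1 := fun n => inv_le_one_of_one_le₀ (hT1 n)
  -- the function
  set f : ℕ → ℝ → ℝ := fun n x => c n * Real.exp (-ε n * x) with hf
  set A : ℝ → ℝ := fun x => ∑' n, f n x with hA
  have hfpos : ∀ n x, 0 < f n x := fun n x => mul_pos (hcpos n) (Real.exp_pos _)
  have hfle : ∀ n x, f n x ≤ c n * Real.exp |x| := by
    intro n x
    refine mul_le_mul_of_nonneg_left (Real.exp_le_exp.2 ?_) (hcpos n).le
    calc -ε n * x ≤ |(-ε n * x)| := le_abs_self _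
      _ = ε n * |x| := by rw [abs_mul, abs_neg, abs_of_nonneg (hεpos n).le]
      _ ≤ 1 * |x| := mul_le_mul_of_nonneg_right (hεle1 n) (abs_nonneg x)
      _ = |x| := one_mul _
  have hS : ∀ x, Summable (fun n => f n x) := by
    intro x
    exact Summable.of_nonneg_of_le (fun n => (hfpos n x).le) (fun n => hfle n x)
      (hcsum.mul_right _)
  -- derivative of each term
  set f' : ℕ → ℝ → ℝ := fun n x => c n * (Real.exp (-ε n * x) * -ε n) with hf'
  have hder : ∀ n x, HasDerivAt (f n) (f' n x) x := by
    intro n x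
    have h1 : HasDerivAt (fun x : ℝ => -ε n * x) (-ε n) x := by
      simpa using (hasDerivAt_id x).const_mul (-ε n)
    exact (h1.exp).const_mul (c n)
  have habs : ∀ n x, |f' n x| = c n * Real.exp (-ε n * x) * ε n := by
    intro n x
    rw [hf']
    have h0 : c n * (Real.exp (-ε n * x) * -ε n) ≤ 0 := by
      apply mul_nonpos_of_nonneg_of_nonpos (hcpos n).le
      exact mul_nonpos_of_nonneg_of_nonpos (Real.exp_pos _).le (by linarith [hεpos n])
    rw [abs_of_nonpos h0]
    ring
  have hf'le : ∀ n x, |f' n x| ≤ c n * Real.exp |x| * ε n := by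
    intro n x
    rw [habs]
    apply mul_le_mul_of_nonneg_right _ (hεpos n).le
    exact hfle n x
  -- the derivative of A at each point
  set D : ℝ → ℝ := fun x => ∑' n, f' n x with hD
  have hS' : ∀ x, Summable (fun n => f' n x) := by
    intro x
    refine Summable.of_norm_bounded (g := fun n => c n * Real.exp |x|) (hcsum.mul_right _) ?_
    intro n
    show ‖f' n x‖ ≤ c n * Real.exp |x|
    calc ‖f' n x‖ = |f' n x| := rfl
      _ ≤ c n * Real.exp |x| * ε n := hf'le n x
      _ ≤ c n * Real.exp |x| * 1 :=
          mul_le_mul_of_nonneg_left (hεle1 n) (mul_nonneg (hcpos n).le (Real.exp_pos _).le)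
      _ = c n * Real.exp |x| := by ring
  have hA' : ∀ y : ℝ, HasDerivAt A (D y) y := by
    intro y
    refine hasDerivAt_tsum_of_isPreconnected
      (u := fun n => c n * Real.exp (|y| + 1)) (hcsum.mul_right _)
      (isOpen_Ioi (a := y - 1)) (convex_Ioi _).isPreconnected
      (fun n z _ => hder n z) (fun n z hz => ?_) (sub_one_lt y) (hS y) (sub_one_lt y)
    have hz' : y - 1 < z := hz
    calc ‖f' n z‖ = |f' n z| := rfl
      _ = c n * Real.exp (-ε n * z) * ε n := habs n z
      _ ≤ c n * Real.exp (|y| + 1) * 1 := by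
          apply mul_le_mul (mul_le_mul_of_nonneg_left (Real.exp_le_exp.2 ?_) (hcpos n).le)
            (hεle1 n) (hεpos n).le (mul_nonneg (hcpos n).le (Real.exp_pos _).le)
          calc -ε n * z ≤ -ε n * (y - 1) := by
                apply mul_le_mul_of_nonpos_left hz'.le (by linarith [hεpos n])
            _ ≤ |(-ε n * (y - 1))| := le_abs_self _
            _ = ε n * |y - 1| := by rw [abs_mul, abs_neg, abs_of_nonneg (hεpos n).le]
            _ ≤ 1 * |y - 1| := mul_le_mul_of_nonneg_right (hεle1 n) (abs_nonneg _)
            _ = |y - 1| := one_mul _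
            _ ≤ |y| + 1 := by
                calc |y - 1| ≤ |y| + |(1:ℝ)| := abs_sub _ _
                  _ = |y| + 1 := by norm_num
      _ = c n * Real.exp (|y| + 1) := by ring
  have hderivA : ∀ y, deriv A y = D y := fun y => (hA' y).deriv
  -- positivity
  have hApos : ∀ x : ℝ, 0 < A x := by
    intro x
    have h1 : f 0 x ≤ A x := Summable.le_tsum (hS x) 0 (fun j _ => (hfpos j x).le)
    exact lt_of_lt_of_le (hfpos 0 x) h1
  -- nonpositivity of D
  have hDnonpos : ∀ x, D x ≤ 0 := by
    intro x
    refine tsum_nonpos fun n => ?_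
    rw [hf']
    have : Real.exp (-ε n * x) * -ε n ≤ 0 := by
      apply mul_nonpos_of_nonneg_of_nonpos (Real.exp_pos _).le (by linarith [hεpos n])
    exact mul_nonpos_of_nonneg_of_nonpos (hcpos n).le this
  -- -D x ≤ A x
  have hDleA : ∀ x, -D x ≤ A x := by
    intro x
    have hnegD : -D x = ∑' n, -f' n x := by rw [hD, ← tsum_neg]
    rw [hnegD]
    refine Summable.tsum_le_tsum (fun n => ?_) ((hS' x).neg) (hS x)
    rw [hf', hf]
    have : -(c n * (Real.exp (-ε n * x) * -ε n)) = c n * Real.exp (-ε n * x) * ε n := by ring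
    rw [this]
    calc c n * Real.exp (-ε n * x) * ε n ≤ c n * Real.exp (-ε n * x) * 1 := by
          exact mul_le_mul_of_nonneg_left (hεle1 n)
            (mul_nonneg (hcpos n).le (Real.exp_pos _).le)
      _ = c n * Real.exp (-ε n * x) := by ring
  -- h ≤ A on [0, ∞)
  have hhA : ∀ x ≥ 0, h x ≤ A x := by
    intro x hx
    have hex : ∃ n, x < T (n + 1) := by
      refine ⟨⌈x⌉₊, ?_⟩
      calc x ≤ (⌈x⌉₊ : ℝ) := Nat.le_ceil x
        _ < (⌈x⌉₊ : ℝ) + 1 := by linarith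
        _ ≤ T ⌈x⌉₊ + 1 := by linarith [hTge ⌈x⌉₊]
        _ ≤ T (⌈x⌉₊ + 1) := hTmono _
    obtain ⟨n, hn⟩ : ∃ n, n = Nat.find hex := ⟨_, rfl⟩
    have hxlt : x < T (n + 1) := by rw [hn]; exact Nat.find_spec hex
    have hTnx : T n ≤ x := by
      match n, hn with
      | 0, hn => rw [hT0]; exact hx
      | (m+1), hn =>
        have hnot : ¬ (x < T (m + 1)) := Nat.find_min hex (by omega)
        exact not_lt.1 hnot
    have h1 : h x ≤ d n := hdec (hTnn n) hx hTnx
    have h2 : d n ≤ f n x := by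
      rw [hf, hc]
      have hle : -(1:ℝ) ≤ -ε n * x := by
        have h3 : ε n * x ≤ ε n * T (n + 1) := mul_le_mul_of_nonneg_left hxlt.le (hεpos n).le
        have h4 : ε n * T (n + 1) = 1 := inv_mul_cancel₀ (hTpos n).ne'
        linarith
      calc d n = Real.exp 1 * d n * Real.exp (-1) := by
            rw [mul_assoc, mul_comm (d n), ← mul_assoc, ← Real.exp_add]
            norm_num
        _ ≤ Real.exp 1 * d n * Real.exp (-ε n * x) := by
            exact mul_le_mul_of_nonneg_left (Real.exp_le_exp.2 hle)
              (mul_nonneg (Real.exp_pos 1).le (hdpos n).le)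
        _ = Real.exp 1 * d n * Real.exp (-ε n * x) := rfl
    have h3 : f n x ≤ A x := Summable.le_tsum (hS x) n (fun j _ => (hfpos j x).le)
    linarith
  -- limit at infinity
  have hAlim : Tendsto A atTop (nhds 0) := by
    have key : Tendsto (fun x => ∑' n, f n x) atTop (nhds (∑' _ : ℕ, (0:ℝ))) := by
      refine tendsto_tsum_of_dominated_convergence hcsum (fun n => ?_) ?_
      · have h1 : Tendsto (fun x : ℝ => -ε n * x) atTop atBot :=
          (tendsto_const_mul_atBot_of_neg (by linarith [hεpos n])).2 tendsto_id
        have h2 : Tendsto (fun x : ℝ => Real.exp (-ε n * x)) atTop (nhds 0) :=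
          Real.tendsto_exp_atBot.comp h1
        simp only [hf]
        simpa using h2.const_mul (c n)
      · filter_upwards [eventually_ge_atTop (0:ℝ)] with x hx n
        rw [Real.norm_eq_abs, abs_of_nonneg (hfpos n x).le, hf]
        calc c n * Real.exp (-ε n * x) ≤ c n * Real.exp 0 := by
              apply mul_le_mul_of_nonneg_left (Real.exp_le_exp.2 ?_) (hcpos n).le
              have := mul_nonneg (hεpos n).le hx
              linarith
          _ = c n := by simp
    simpa using key
  -- analyticity
  have hcontdiff : ContDiff ℝ (⊤ : ℕ∞) A := by
    set G : ℂ → ℂ := fun z => ∑' n, (c n : ℂ) * Complex.exp (-(ε n : ℂ) * z) with hG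
    have hGdiff : Differentiable ℂ G := by
      intro z₀
      have hball : DifferentiableOn ℂ G (Metric.ball 0 (‖z₀‖ + 1)) := by
        refine Complex.differentiableOn_tsum_of_summable_norm
          (u := fun n => c n * Real.exp (‖z₀‖ + 1)) (hcsum.mul_right _)
          (fun n => (Differentiable.differentiableOn (by
            exact (Complex.differentiable_exp.comp ((differentiable_id).const_mul _)).const_mul _)))
          Metric.isOpen_ball (fun n w hw => ?_)
        rw [norm_mul, Complex.norm_exp]
        have h1 : ‖(c n : ℂ)‖ = c n := by
          rw [Complex.norm_real, Real.norm_eq_abs, abs_of_nonneg (hcpos n).le]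
        rw [h1]
        apply mul_le_mul_of_nonneg_left (Real.exp_le_exp.2 ?_) (hcpos n).le
        have hre : (-(ε n : ℂ) * w).re = -ε n * w.re := by simp
        rw [hre]
        calc -ε n * w.re ≤ |(-ε n * w.re)| := le_abs_self _
          _ = ε n * |w.re| := by rw [abs_mul, abs_neg, abs_of_nonneg (hεpos n).le]
          _ ≤ 1 * ‖w‖ := by
              apply mul_le_mul (hεle1 n) (Complex.abs_re_le_norm w) (abs_nonneg _) zero_le_one
          _ ≤ ‖z₀‖ + 1 := by
              rw [one_mul]
              have := Metric.mem_ball.1 hw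
              rw [dist_zero_right] at this
              linarith
      have hz₀ : z₀ ∈ Metric.ball (0:ℂ) (‖z₀‖ + 1) := by
        rw [Metric.mem_ball, dist_zero_right]; linarith
      exact ((hball z₀ hz₀).differentiableAt (Metric.isOpen_ball.mem_nhds hz₀))
    have hGanal : AnalyticOnNhd ℂ G univ :=
      hGdiff.differentiableOn.analyticOnNhd isOpen_univ
    have h1 : ∀ x : ℝ, (∑' n, (c n : ℂ) * Complex.exp (-(ε n : ℂ) * (x : ℂ))) = ((A x : ℝ) : ℂ) := by
      intro x
      have h2 : ((A x : ℝ) : ℂ) = ∑' n, ((f n x : ℝ) : ℂ) := by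
        simp only [hA]
        simpa using Complex.ofRealCLM.map_tsum (hS x)
      rw [h2]
      congr 1
      funext n
      simp only [hf]
      push_cast [Complex.ofReal_exp]
      ring_nf
    have hAeq : A = fun x : ℝ => (G (Complex.ofRealCLM x)).re := by
      funext x
      simp only [hG, Complex.ofRealCLM_apply]
      rw [h1 x]
      simp
    rw [hAeq]
    refine ContDiff.of_le ?_ le_top
    rw [contDiff_omega_iff_analyticOnNhd]
    have h3 : AnalyticOnNhd ℝ G univ := hGanal.restrictScalars
    have h4 : AnalyticOnNhd ℝ (fun x : ℝ => G (Complex.ofRealCLM x)) univ :=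
      h3.comp (Complex.ofRealCLM.analyticOnNhd univ) (mapsTo_univ _ _)
    exact fun x _ =>
      ((Complex.reCLM.analyticAt _).comp (h4 x (mem_univ x)))
  -- antitone
  have hAanti : AntitoneOn A (Set.Ici 0) := by
    refine antitoneOn_of_deriv_nonpos (convex_Ici 0) ?_ ?_ ?_
    · exact fun x _ => ((hA' x).differentiableAt.continuousAt).continuousWithinAt
    · exact fun x _ => (hA' x).differentiableAt.differentiableWithinAt
    · intro x _
      rw [hderivA]
      exact hDnonpos x
  refine ⟨A, hcontdiff, fun t _ => hApos t, hAanti, hhA, hAlim, fun t ht => ?_⟩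
  rw [hderivA]
  constructor
  · linarith [hDnonpos t]
  · have h1 := hDleA t
    have h2 := hApos t
    linarith
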